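/- arXiv:2401.14605 — 3 statements merged into one kernel-verified Lean document; each statement's English description precedes it below -/
import Mathlib

section
/- Let X be a standard Borel space, let E be an aperiodic, countable Borel equivalence relation on X, and let n, k > 1 be integers. If there exists a Borel infinite complete section Y ⊆ X such that the strong Borel Ramsey property F →_B (F)^n_k holds, where F = E restricted to Y, then the strong Borel Ramsey property E →_B (E)^n_k holds. -/
open Classical

noncomputable section

/-- `Y` is a complete section for `E`: it meets every `E`-class. -/
def IsCompleteSection {X : Type*} (E : X → X → Prop) (Y : Set X) : Prop :=
  ∀ x : X, ∃ y ∈ Y, E x y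

/-- `Y` is an infinite complete section for `E`: it meets every `E`-class in an infinite set. -/
def IsInfiniteCompleteSection {X : Type*} (E : X → X → Prop) (Y : Set X) : Prop :=
  ∀ x : X, {y | y ∈ Y ∧ E x y}.Infinite

/-- A coloring `c` of the `n`-element subsets of single `E`-classes (encoded as a function on
finsets) is `E`-monochromatic on `Y`: for every `x` there is a color `a` such that every
`n`-element subset of `Y` contained in `[x]_E` gets color `a`. -/
def IsMonochromatic {X : Type*} (E : X → X → Prop) (n : ℕ) {k : ℕ}
    (c : Finset X → Fin k) (Y : Set X) : Prop :=
  ∀ x : X, ∃ a : Fin k, ∀ A : Finset X, A.card = n → ↑A ⊆ Y → (∀ y ∈ A, E x y) → c A = a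

/-- `c` is a Borel coloring of dimension `n`: the induced map on `n`-tuples is measurable. -/
def IsBorelColoring {X : Type*} [MeasurableSpace X] (n : ℕ) {k : ℕ}
    (c : Finset X → Fin k) : Prop :=
  Measurable fun v : Fin n → X => c (Set.finite_range v).toFinset

/-- The strong Borel Ramsey property `E →_B (E)^n_k`: every Borel `E`-coloring of dimension
`n` by `k` colors admits a Borel `E`-monochromatic infinite complete section. -/
def StrongBorelRamsey {X : Type*} [MeasurableSpace X] (E : X → X → Prop) (n k : ℕ) : Prop :=
  ∀ c : Finset X → Fin k, IsBorelColoring n c →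
    ∃ Y : Set X, MeasurableSet Y ∧ IsInfiniteCompleteSection E Y ∧ IsMonochromatic E n c Y

/-- The weak Borel Ramsey property `E →*_B (E)^n_k`: every Borel `E`-coloring of dimension
`n` by `k` colors admits a Borel `E`-monochromatic complete section. -/
def WeakBorelRamsey {X : Type*} [MeasurableSpace X] (E : X → X → Prop) (n k : ℕ) : Prop :=
  ∀ c : Finset X → Fin k, IsBorelColoring n c →
    ∃ Y : Set X, MeasurableSet Y ∧ IsCompleteSection E Y ∧ IsMonochromatic E n c Y

/-- `E` is smooth: Borel reducible to equality on a standard Borel space. -/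
def IsSmooth {X : Type*} [MeasurableSpace X] (E : X → X → Prop) : Prop :=
  ∃ (Z : Type) (mZ : MeasurableSpace Z), @StandardBorelSpace Z mZ ∧
    ∃ f : X → Z, @Measurable X Z _ mZ f ∧ ∀ x y : X, E x y ↔ f x = f y

/-- The eventual agreement relation `E₀` on Cantor space `2^ℕ`. -/
def E0 (x y : ℕ → Bool) : Prop := ∃ n : ℕ, ∀ m ≥ n, x m = y m

/-- `Σ_{i<δ(x,y)} x i + Σ_{i<δ(x,y)} y i`, where `δ(x,y)` is the least `n` with
`x m = y m` for all `m ≥ n`; junk value `0` if `x` and `y` are not `E₀`-related. -/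
def colorSum (x y : ℕ → Bool) : ℕ :=
  if h : ∃ n : ℕ, ∀ m ≥ n, x m = y m then
    ((Finset.range (Nat.find h)).sum fun i => (x i).toNat) +
    ((Finset.range (Nat.find h)).sum fun i => (y i).toNat)
  else 0

/-- The coloring `c` of the paper: a pair `{x,y}` of distinct `E₀`-related points gets color
`0` (representing color `1`) if `colorSum x y` is even, and color `1` (representing color `2`)
otherwise. -/
def c0 : Finset (ℕ → Bool) → Fin 2 := fun A =>
  if ∃ x y : ℕ → Bool, x ≠ y ∧ A = {x, y} ∧ E0 x y ∧ Even (colorSum x y) then 0 else 1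

/-- The subrelation `F` of `E₀`: `x F y` iff `x = y` or `c ({x,y}) = 1` (even `colorSum`). -/
def F0 (x y : ℕ → Bool) : Prop := x = y ∨ (E0 x y ∧ Even (colorSum x y))

/-- The map flipping coordinate `0`. -/
def flip0 (x : ℕ → Bool) : ℕ → Bool := fun n => if n = 0 then !(x 0) else x n

/-- Eventual agreement of `X`-valued sequences: the relation `E₀(X)` on `X^ℕ`
(denoted `E₁` when `X` is uncountable). -/
def E1rel {X : Type*} (u v : ℕ → X) : Prop := ∃ N : ℕ, ∀ j ≥ N, u j = v j

/-- `S` is a monochromatic reduction to `E₁` for the coloring `c` of dimension `n`: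
each `S x` is injective, its range is a monochromatic subset of `[x]_E`, and
`x E y ↔ S x E₁ S y`. -/
def IsMonochromaticReduction {X : Type*} (E : X → X → Prop) (n : ℕ) {k : ℕ}
    (c : Finset X → Fin k) (S : X → ℕ → X) : Prop :=
  (∀ x : X, Function.Injective (S x)) ∧
  (∀ x : X, (∀ i : ℕ, E x (S x i)) ∧
    ∃ a : Fin k, ∀ A : Finset X, A.card = n → ↑A ⊆ Set.range (S x) → c A = a) ∧
  (∀ x y : X, E x y ↔ E1rel (S x) (S y))

/-- `c` is an almost transitive coloring of dimension `n` for `E`: for every `m ≥ n`, every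
`A ∈ [X]^m_E` and all `(n-1)`-element subsets `B₁, B₂ ⊆ A`, one has
`c ({z} ∪ B₁) = c ({z} ∪ B₂)` for all but finitely many `z` in the `E`-saturation of `A`
outside `B₁ ∪ B₂`. -/
def AlmostTransitive {X : Type*} (E : X → X → Prop) (n : ℕ) {k : ℕ}
    (c : Finset X → Fin k) : Prop :=
  ∀ m : ℕ, n ≤ m → ∀ A : Finset X, A.card = m → (∀ x ∈ A, ∀ y ∈ A, E x y) →
    ∀ B₁ B₂ : Finset X, B₁ ⊆ A → B₂ ⊆ A → B₁.card = n - 1 → B₂.card = n - 1 →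
      {z : X | (∃ a ∈ A, E a z) ∧ z ∉ B₁ ∪ B₂ ∧ c (insert z B₁) ≠ c (insert z B₂)}.Finite

/-!
Pull a coloring `c` of `[X]^n_E` back to `Y` along the inclusion. A Borel monochromatic
infinite complete section `Z` for the pulled-back coloring is, viewed inside `X`, already
one for `c`: every `E`-class meets `Y`, hence meets `Z` in an infinite set, and the `n`-sets of
`Z` inside one `E`-class are exactly the images of the `n`-sets of `Z` inside one class of
`E ↾ Y`.
-/

open Set

section Pullback

variable {X Y : Type*} {E : X → X → Prop} {f : Y → X}

theorem IsBorelColoring.comp_image [MeasurableSpace X] [MeasurableSpace Y] {n k : ℕ}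
    {c : Finset X → Fin k} (hc : IsBorelColoring n c) (hf : Measurable f) :
    IsBorelColoring n fun A : Finset Y => c (A.image f) := by
  have hrange : ∀ v : Fin n → Y,
      (finite_range v).toFinset.image f = (finite_range (f ∘ v)).toFinset := by
    intro v
    ext x
    simp
  simp only [IsBorelColoring, hrange]
  exact hc.comp (measurable_pi_lambda _ fun i => hf.comp (measurable_pi_apply i))

theorem IsInfiniteCompleteSection.isCompleteSection {Z : Set X}
    (hZ : IsInfiniteCompleteSection E Z) : IsCompleteSection E Z :=
  fun x => (hZ x).nonempty

theorem IsInfiniteCompleteSection.image [IsTrans X E] (hf : Function.Injective f) (hrange : IsCompleteSection E (range f)) {Z : Set Y}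
    (hZ : IsInfiniteCompleteSection (fun a b => E (f a) (f b)) Z) :
    IsInfiniteCompleteSection E (f '' Z) := by
  intro x
  obtain ⟨_, ⟨y, rfl⟩, hxy⟩ := hrange x
  refine ((hZ y).image hf.injOn).mono ?_
  rintro _ ⟨z, ⟨hzZ, hyz⟩, rfl⟩
  exact ⟨mem_image_of_mem f hzZ, _root_.trans hxy hyz⟩

theorem IsMonochromatic.image [DecidableEq X] (hE : Equivalence E)
    (hf : Function.Injective f) (hrange : IsCompleteSection E (range f)) {n k : ℕ}
    {c : Finset X → Fin k} {Z : Set Y}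
    (hZ : IsMonochromatic (fun a b => E (f a) (f b)) n (fun A => c (A.image f)) Z) :
    IsMonochromatic E n c (f '' Z) := by
  intro x
  obtain ⟨_, ⟨y, rfl⟩, hxy⟩ := hrange x
  obtain ⟨a, ha⟩ := hZ y
  refine ⟨a, fun A hcard hsub hEA => ?_⟩
  obtain ⟨A', hA'Z, rfl⟩ := Finset.subset_set_image_iff.mp hsub
  refine ha A' ?_ hA'Z fun z hz => hE.trans (hE.symm hxy) (hEA _ (Finset.mem_image_of_mem f hz))
  rwa [Finset.card_image_of_injective _ hf] at hcard

end Pullback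

theorem strong_borel_ramsey_of_complete_section_general {X : Type*} [MeasurableSpace X]
    (E : X → X → Prop) (hE : Equivalence E)
    (n k : ℕ)
    (hex : ∃ Y : Set X, MeasurableSet Y ∧ IsInfiniteCompleteSection E Y ∧
      StrongBorelRamsey (fun a b : Y => E a b) n k) :
    StrongBorelRamsey E n k := by
  obtain ⟨Y, hY, hYinf, hYR⟩ := hex
  intro c hc
  have hrange : IsCompleteSection E (range ((↑) : Y → X)) := by
    simpa only [Subtype.range_coe] using hYinf.isCompleteSection
  have := hE.isTrans
  obtain ⟨Z, hZ, hZinf, hZmono⟩ := hYR _ (hc.comp_image measurable_subtype_coe)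
  exact ⟨_, hY.subtype_image hZ, hZinf.image Subtype.val_injective hrange,
    hZmono.image hE Subtype.val_injective hrange⟩

/-- If there is a Borel infinite complete section `Y` such that the strong Borel Ramsey
property holds for `F = E ↾ Y`, then `E →_B (E)^n_k` holds. -/
theorem strong_borel_ramsey_of_complete_section {X : Type*} [MeasurableSpace X] [StandardBorelSpace X]
    (E : X → X → Prop) (hE : Equivalence E)
    (hEBorel : MeasurableSet {p : X × X | E p.1 p.2})
    (hcount : ∀ x : X, {y | E x y}.Countable)
    (haper : ∀ x : X, {y | E x y}.Infinite)
    (n k : ℕ) (hn : 1 < n) (hk : 1 < k)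
    (hex : ∃ Y : Set X, MeasurableSet Y ∧ IsInfiniteCompleteSection E Y ∧
      StrongBorelRamsey (fun a b : Y => E a b) n k) :
    StrongBorelRamsey E n k :=
  strong_borel_ramsey_of_complete_section_general E hE n k hex
end
end

section
/- Let E_0 be the eventual-agreement equivalence relation on the Cantor space 2^ℕ. For distinct x, y ∈ 2^ℕ with x E_0 y, let δ(x, y) = min{n : x(m) = y(m) for all m ≥ n}, and define c({x, y}) = 1 if Σ_{i<δ(x,y)} x(i) + Σ_{i<δ(x,y)} y(i) is even, and c({x, y}) = 2 otherwise. Then c is a Borel E_0-coloring of dimension 2 by 2 colors, and there exists no Borel E_0-monochromatic infinite complete section for c. -/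
open Classical

noncomputable section

/-!
Call `x, y` parity-related (`F0`) if they differ in an even number of coordinates; inside each
`E₀`-class this is an equivalence relation with two classes, and `c0 {x, y} = 0` exactly when
`x ≠ y` are parity-related. Among three points of a class two are parity-related, so on a
monochromatic infinite complete section `Y` the colour is `0` in every class, i.e. `Y` meets
each `E₀`-class inside a single parity class. The parity saturation `Z` of `Y` is then Borel,
and flipping any single coordinate maps `Z` onto its complement. This is impossible for a set
with the Baire property: if `Z` agrees with the open set `U` up to a meagre set, flipping a
coordinate far enough out maps a point of `U` back into `U`, so on the nonempty open set
`U ∩ flip⁻¹ U` both `Z` and its complement are comeagre.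
-/

open Filter Topology
open scoped symmDiff

namespace Set

theorem even_ncard_symmDiff {α : Type*} {s t : Set α} (hs : s.Finite) (ht : t.Finite) :
    Even (s ∆ t).ncard ↔ (Even s.ncard ↔ Even t.ncard) := by
  have hunion := ncard_union_add_ncard_inter s t hs ht
  have hsymm : (s ∆ t).ncard + (s ∩ t).ncard = (s ∪ t).ncard := by
    rw [symmDiff_eq_sup_sdiff_inf]
    exact ncard_sdiff_add_ncard_of_subset inf_le_sup (hs.union ht)
  have hsum : (s ∆ t).ncard + 2 * (s ∩ t).ncard = s.ncard + t.ncard := by omega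
  rw [← Nat.even_add, ← hsum]
  simp [Nat.even_add]

end Set

section Coordinates

variable {ι β : Type*}

def diffSet (x y : ι → β) : Set ι := {i | x i ≠ y i}

theorem diffSet_comm (x y : ι → β) : diffSet x y = diffSet y x := by
  ext i
  exact ne_comm

@[simp]
theorem diffSet_self (x : ι → β) : diffSet x x = ∅ := by
  simp [diffSet]

theorem diffSet_eq_symmDiff (x y z : ι → Bool) :
    diffSet y z = diffSet x y ∆ diffSet x z := by
  ext i
  simp only [diffSet, Set.mem_symmDiff, Set.mem_ofPred_eq]
  cases x i <;> cases y i <;> cases z i <;> decide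

variable [DecidableEq ι]

def flipAt (t : Finset ι) (x : ι → Bool) : ι → Bool := fun i => xor (decide (i ∈ t)) (x i)

theorem flipAt_involutive (t : Finset ι) : Function.Involutive (flipAt t) := by
  intro x
  funext i
  simp [flipAt]

theorem flipAt_eq_iff {t : Finset ι} {x y : ι → Bool} : flipAt t x = y ↔ diffSet x y = ↑t := by
  simp only [funext_iff, Set.ext_iff, flipAt, diffSet, Set.mem_ofPred_eq, Finset.mem_coe]
  refine forall_congr' fun i => ?_
  by_cases hi : i ∈ t <;> cases x i <;> cases y i <;> simp [hi]

theorem diffSet_flipAt (t : Finset ι) (x : ι → Bool) : diffSet x (flipAt t x) = ↑t :=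
  flipAt_eq_iff.mp rfl

end Coordinates

theorem E0_equivalence : Equivalence E0 where
  refl _ := ⟨0, fun _ _ => rfl⟩
  symm := fun ⟨n, h⟩ => ⟨n, fun m hm => (h m hm).symm⟩
  trans := fun ⟨n, h⟩ ⟨n', h'⟩ =>
    ⟨max n n', fun m hm => (h m (le_of_max_le_left hm)).trans (h' m (le_of_max_le_right hm))⟩

theorem E0_iff_finite_diffSet {x y : ℕ → Bool} : E0 x y ↔ (diffSet x y).Finite := by
  constructor
  · rintro ⟨n, hn⟩
    exact (Set.finite_Iio n).subset fun i hi => not_le.mp fun h => hi (hn i h)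
  · intro h
    obtain ⟨n, hn⟩ := h.bddAbove
    exact ⟨n + 1, fun m hm => not_not.mp fun hne => by have := hn hne; omega⟩

theorem even_colorSum_iff {x y : ℕ → Bool} (h : E0 x y) :
    Even (colorSum x y) ↔ Even (diffSet x y).ncard := by
  obtain h : ∃ n : ℕ, ∀ m ≥ n, x m = y m := h
  rw [colorSum, dif_pos h, ← Finset.sum_add_distrib]
  have hdiff : diffSet x y = ↑((Finset.range (Nat.find h)).filter fun i => x i ≠ y i) := by
    ext i
    simp only [diffSet, Set.mem_ofPred_eq, Finset.coe_filter, Finset.mem_range]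
    exact ⟨fun hne => ⟨not_le.mp fun hi => hne (Nat.find_spec h i hi), hne⟩, And.right⟩
  have hpair : ∀ i, (x i).toNat + (y i).toNat =
      (if x i ≠ y i then 1 else 0) + 2 * (x i && y i).toNat := by
    intro i
    cases x i <;> cases y i <;> rfl
  rw [hdiff, Set.ncard_coe_finset, Finset.card_filter, Finset.sum_congr rfl fun i _ => hpair i,
    Finset.sum_add_distrib, ← Finset.mul_sum]
  simp [Nat.even_add]

theorem F0_iff_diffSet {x y : ℕ → Bool} :
    F0 x y ↔ (diffSet x y).Finite ∧ Even (diffSet x y).ncard := by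
  constructor
  · rintro (rfl | ⟨h, heven⟩)
    · simp
    · exact ⟨E0_iff_finite_diffSet.mp h, (even_colorSum_iff h).mp heven⟩
  · rintro ⟨hfin, heven⟩
    have h := E0_iff_finite_diffSet.mpr hfin
    exact Or.inr ⟨h, (even_colorSum_iff h).mpr heven⟩

theorem F0.E0 {x y : ℕ → Bool} (h : F0 x y) : E0 x y :=
  E0_iff_finite_diffSet.mpr (F0_iff_diffSet.mp h).1

theorem F0_comm {x y : ℕ → Bool} : F0 x y ↔ F0 y x := by
  rw [F0_iff_diffSet, F0_iff_diffSet, diffSet_comm]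

theorem F0_iff_F0_iff {x y z : ℕ → Bool} (hxy : E0 x y) (hxz : E0 x z) :
    F0 y z ↔ (F0 x y ↔ F0 x z) := by
  rw [E0_iff_finite_diffSet] at hxy hxz
  rw [F0_iff_diffSet, F0_iff_diffSet, F0_iff_diffSet, diffSet_eq_symmDiff x,
    Set.even_ncard_symmDiff hxy hxz]
  simp [hxy, hxz, hxy.symmDiff hxz]

theorem F0_iff_exists_flipAt {x y : ℕ → Bool} :
    F0 x y ↔ ∃ t : Finset ℕ, Even t.card ∧ flipAt t x = y := by
  constructor
  · intro h
    obtain ⟨hfin, heven⟩ := F0_iff_diffSet.mp h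
    refine ⟨hfin.toFinset, ?_, flipAt_eq_iff.mpr hfin.coe_toFinset.symm⟩
    rwa [← Set.ncard_eq_toFinset_card _ hfin]
  · rintro ⟨t, ht, rfl⟩
    simp [F0_iff_diffSet, diffSet_flipAt, ht]

theorem E0_flipAt (t : Finset ℕ) (x : ℕ → Bool) : E0 x (flipAt t x) := by
  simp [E0_iff_finite_diffSet, diffSet_flipAt]

theorem not_F0_flipAt_singleton (n : ℕ) (x : ℕ → Bool) : ¬ F0 x (flipAt {n} x) := by
  simp [F0_iff_diffSet, diffSet_flipAt]

theorem c0_pair (x y : ℕ → Bool) : c0 {x, y} = if x ≠ y ∧ F0 x y then 0 else 1 := by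
  refine if_congr ⟨?_, ?_⟩ rfl rfl
  · rintro ⟨a, b, hab, hpair, h, heven⟩
    have hF : F0 a b := Or.inr ⟨h, heven⟩
    rw [← Finset.coe_inj, Finset.coe_pair, Finset.coe_pair, Set.pair_eq_pair_iff] at hpair
    rcases hpair with ⟨rfl, rfl⟩ | ⟨rfl, rfl⟩
    · exact ⟨hab, hF⟩
    · exact ⟨hab.symm, F0_comm.mp hF⟩
  · rintro ⟨hxy, hxy' | hF⟩
    · exact absurd hxy' hxy
    · exact ⟨x, y, hxy, rfl, hF⟩

theorem c0_pair_eq_zero_iff {x y : ℕ → Bool} : c0 {x, y} = 0 ↔ x ≠ y ∧ F0 x y := by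
  rw [c0_pair]
  split_ifs with h <;> simp [h]

section Topology

variable {ι : Type*} [DecidableEq ι]

theorem continuous_flipAt (t : Finset ι) : Continuous (flipAt t) :=
  continuous_pi fun i => continuous_of_discreteTopology.comp (continuous_apply i)

theorem isOpenMap_flipAt (t : Finset ι) : IsOpenMap (flipAt t) := fun U hU => by
  rw [(flipAt_involutive t).image_eq_preimage_symm]
  exact hU.preimage (continuous_flipAt t)

theorem tendsto_flipAt_singleton (x : ι → Bool) :
    Tendsto (fun i => flipAt {i} x) cofinite (𝓝 x) := by
  refine tendsto_pi_nhds.mpr fun j => tendsto_const_nhds.congr' ?_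
  filter_upwards [eventually_cofinite_ne j] with i hi
  simp [flipAt, Ne.symm hi]

theorem not_baireMeasurableSet_of_preimage_flipAt_eq_compl [Infinite ι] {Z : Set (ι → Bool)}
    (hZ : ∀ i, flipAt {i} ⁻¹' Z = Zᶜ) : ¬ BaireMeasurableSet Z := by
  intro hBM
  obtain ⟨U, hU, hZU⟩ := hBM.residualEq_isOpen
  have hflipU (i : ι) : (flipAt {i} ⁻¹' U : Set (ι → Bool)) =ᵇ (Uᶜ : Set (ι → Bool)) := by
    have : (flipAt {i} ⁻¹' Z : Set (ι → Bool)) =ᵇ (flipAt {i} ⁻¹' U : Set (ι → Bool)) :=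
      hZU.comp_tendsto
        (tendsto_residual_of_isOpenMap (continuous_flipAt {i}) (isOpenMap_flipAt {i}))
    rw [hZ] at this
    exact this.symm.trans hZU.compl
  rcases U.eq_empty_or_nonempty with rfl | ⟨x, hx⟩
  · have := hflipU (Classical.arbitrary ι)
    rw [Set.preimage_empty, Set.compl_empty] at this
    exact not_isMeagre_of_isOpen isOpen_univ Set.univ_nonempty
      (by simpa [IsMeagre] using eventuallyEq_univ.mp this)
  · obtain ⟨i, hi⟩ := ((tendsto_flipAt_singleton x).eventually (hU.mem_nhds hx)).exists
    refine not_isMeagre_of_isOpen (hU.inter (hU.preimage (continuous_flipAt {i}))) ⟨x, hx, hi⟩ ?_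
    have := (EventuallyEq.refl _ U).inter (hflipU i)
    rw [Set.inter_compl_self] at this
    exact eventuallyEq_empty.mp this

end Topology

theorem IsMonochromatic.exists_pair_color {X : Type*} {E : X → X → Prop} {k : ℕ}
    {c : Finset X → Fin k} {Y : Set X} (h : IsMonochromatic E 2 c Y) (x : X) :
    ∃ a, ∀ y ∈ Y, ∀ y' ∈ Y, y ≠ y' → E x y → E x y' → c {y, y'} = a := by
  obtain ⟨a, ha⟩ := h x
  refine ⟨a, fun y hy y' hy' hne hxy hxy' => ha _ (Finset.card_pair hne) ?_ ?_⟩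
  · simp [Set.insert_subset_iff, hy, hy']
  · simp [hxy, hxy']

theorem F0_of_monochromatic {Y : Set (ℕ → Bool)} (hY : IsInfiniteCompleteSection E0 Y)
    (hc : IsMonochromatic E0 2 c0 Y) {y y' : ℕ → Bool} (hy : y ∈ Y) (hy' : y' ∈ Y)
    (h : E0 y y') : F0 y y' := by
  rcases eq_or_ne y y' with rfl | hne
  · exact Or.inl rfl
  obtain ⟨a, ha⟩ := hc.exists_pair_color y
  obtain ⟨w, ⟨hwY, hyw⟩, hw⟩ : ∃ w, (w ∈ Y ∧ E0 y w) ∧ w ∉ ({y, y'} : Set (ℕ → Bool)) :=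
    ((hY y).sdiff (Set.toFinite _)).nonempty
  simp only [Set.mem_insert_iff, Set.mem_singleton_iff, not_or] at hw
  have hcolor {p q : ℕ → Bool} (hpq : p ≠ q) (hpqa : c0 {p, q} = a) : F0 p q ↔ a = 0 := by
    rw [← hpqa, c0_pair_eq_zero_iff, and_iff_right hpq]
  have h₁ := hcolor hne (ha y hy y' hy' hne (E0_equivalence.refl y) h)
  have h₂ := hcolor (Ne.symm hw.1) (ha y hy w hwY (Ne.symm hw.1) (E0_equivalence.refl y) hyw)
  have h₃ := hcolor hw.2 (ha w hwY y' hy' hw.2 hyw h)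
  -- Two of the three pairs in `{y, y', w}` are `F0`-related, so their common colour is `0`.
  have hpar := F0_iff_F0_iff hyw h
  rw [h₁, h₂, h₃, iff_self, iff_true] at hpar
  exact h₁.mpr hpar

def F0Saturation (Y : Set (ℕ → Bool)) : Set (ℕ → Bool) := {z | ∃ y ∈ Y, F0 z y}

theorem measurableSet_F0Saturation {Y : Set (ℕ → Bool)} (hY : MeasurableSet Y) :
    MeasurableSet (F0Saturation Y) := by
  have hZ : F0Saturation Y = ⋃ (t : Finset ℕ) (_ : Even t.card), flipAt t ⁻¹' Y := by
    ext z
    simp [F0Saturation, F0_iff_exists_flipAt, and_comm]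
  rw [hZ]
  exact .iUnion fun t => .iUnion fun _ => (continuous_flipAt t).measurable hY

theorem mem_F0Saturation_iff {Y : Set (ℕ → Bool)} (hY : IsInfiniteCompleteSection E0 Y)
    (hc : IsMonochromatic E0 2 c0 Y) {y z : ℕ → Bool} (hy : y ∈ Y) (hyz : E0 y z) :
    z ∈ F0Saturation Y ↔ F0 y z := by
  refine ⟨fun ⟨y', hy', hzy'⟩ => ?_, fun h => ⟨y, hy, F0_comm.mp h⟩⟩
  have hyy' := E0_equivalence.trans hyz hzy'.E0
  exact ((F0_iff_F0_iff hyy' hyz).mp (F0_comm.mp hzy')).mp (F0_of_monochromatic hY hc hy hy' hyy')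

theorem preimage_flipAt_F0Saturation {Y : Set (ℕ → Bool)} (hY : IsInfiniteCompleteSection E0 Y)
    (hc : IsMonochromatic E0 2 c0 Y) (n : ℕ) :
    flipAt {n} ⁻¹' F0Saturation Y = (F0Saturation Y)ᶜ := by
  ext z
  obtain ⟨y, hy, hzy⟩ := (hY z).nonempty
  have hyz := E0_equivalence.symm hzy
  have hyz' := E0_equivalence.trans hyz (E0_flipAt {n} z)
  have hflip := not_F0_flipAt_singleton n z
  rw [F0_iff_F0_iff hyz hyz', _root_.not_iff] at hflip
  change flipAt {n} z ∈ F0Saturation Y ↔ z ∉ F0Saturation Y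
  rw [mem_F0Saturation_iff hY hc hy hyz, mem_F0Saturation_iff hY hc hy hyz']
  exact hflip.symm

theorem measurableSet_setOf_ne_and_F0 :
    MeasurableSet {p : (ℕ → Bool) × (ℕ → Bool) | p.1 ≠ p.2 ∧ F0 p.1 p.2} := by
  have hF_eq : {p : (ℕ → Bool) × (ℕ → Bool) | F0 p.1 p.2} =
      ⋃ (t : Finset ℕ) (_ : Even t.card), {p | flipAt t p.1 = p.2} := by
    ext p
    simp [F0_iff_exists_flipAt]
  have hF : MeasurableSet {p : (ℕ → Bool) × (ℕ → Bool) | F0 p.1 p.2} := by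
    rw [hF_eq]
    exact .iUnion fun t => .iUnion fun _ =>
      measurableSet_eq_fun ((continuous_flipAt t).measurable.comp measurable_fst) measurable_snd
  exact measurableSet_diagonal.compl.inter hF

theorem isBorelColoring_c0 : IsBorelColoring 2 c0 := by
  have hrange (v : Fin 2 → ℕ → Bool) : (Set.finite_range v).toFinset = {v 0, v 1} := by
    ext x
    simp [Fin.exists_fin_two, eq_comm]
  have hpair : Measurable fun v : Fin 2 → ℕ → Bool => (v 0, v 1) := by fun_prop
  have hS := measurableSet_setOf_ne_and_F0.preimage hpair
  unfold IsBorelColoring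
  simp_rw [hrange, c0_pair]
  exact Measurable.ite hS measurable_const measurable_const

/-- The parity coloring `c0` is a Borel `E₀`-coloring of dimension `2` by `2` colors, and
there is no Borel `E₀`-monochromatic infinite complete section for it. -/
theorem no_monochromatic_section_for_parity_coloring :
    IsBorelColoring 2 c0 ∧
    ¬ ∃ Y : Set (ℕ → Bool), MeasurableSet Y ∧ IsInfiniteCompleteSection E0 Y ∧
      IsMonochromatic E0 2 c0 Y := by
  refine ⟨isBorelColoring_c0, fun ⟨Y, hYm, hY, hc⟩ => ?_⟩
  exact not_baireMeasurableSet_of_preimage_flipAt_eq_compl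
    (preimage_flipAt_F0Saturation hY hc) (measurableSet_F0Saturation hYm).baireMeasurableSet
end
end

section
/- Let E_0 be the eventual-agreement equivalence relation on 2^ℕ, and define F on 2^ℕ by: x F y if and only if x = y, or x E_0 y and Σ_{i<δ(x,y)} x(i) + Σ_{i<δ(x,y)} y(i) is even, where δ(x, y) = min{n : x(m) = y(m) for all m ≥ n}. Let σ : 2^ℕ → 2^ℕ be the map that flips the coordinate 0 of its input (σ(x)(0) = 1 − x(0) and σ(x)(n) = x(n) for n > 0). Then there is no Borel set W ⊆ 2^ℕ that is F-invariant (x ∈ W and x F y imply y ∈ W) and satisfies W ∪ σ(W) = 2^ℕ and W ∩ σ(W) = ∅. -/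
open Classical

noncomputable section

/-!
Adding `charVec s` to a point flips its coordinates in `s`; when `#s` is even, the point and its
flip are `F0`-related, since the parity of `colorSum` is that of the number of coordinates where
the two points differ. So an `F0`-invariant `W` is invariant under translation by `charVec {0, m}`
for every `m ≠ 0`, while translation by `charVec {0}` (that is, `flip0`) swaps `W` and its
complement. On a cylinder depending only on coordinates other than `m`, these two translations
act in the same way, so by translation invariance of Haar measure `W` and `Wᶜ` have equal measure
in every cylinder. Hence the restrictions of Haar measure to `W` and to `Wᶜ` coincide, and the
measure of the whole space would be `0`.
-/

open MeasureTheory Set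

theorem Function.Involutive.preimage_eq_compl_of_union_of_inter {α : Type*} {f : α → α}
    (hf : f.Involutive) {W : Set α} (hu : W ∪ f '' W = univ) (hd : W ∩ f '' W = ∅) :
    f ⁻¹' W = Wᶜ := by
  rw [hf.image_eq_preimage_symm] at hu hd
  exact (IsCompl.of_eq hd hu).compl_eq.symm

theorem preimage_add_cylinder_congr {ι : Type*} {α : ι → Type*} [∀ i, Add (α i)]
    {g h : ∀ i, α i} {s : Finset ι} (hgh : ∀ i ∈ s, g i = h i) (S : Set (∀ i : s, α i)) :
    (g + ·) ⁻¹' cylinder s S = (h + ·) ⁻¹' cylinder s S := by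
  ext x
  simp only [mem_preimage, mem_cylinder]
  refine Eq.to_iff (congrArg (· ∈ S) (funext fun i => ?_))
  simp [hgh i i.2]

namespace MeasureTheory

theorem measure_inter_eq_measure_inter_compl_of_preimage_add {G : Type*} [MeasurableSpace G]
    [AddGroup G] [MeasurableAdd G] {μ : Measure G} [μ.IsAddLeftInvariant] {W A : Set G}
    {g h : G} (hg : (g + ·) ⁻¹' W = W) (hh : (h + ·) ⁻¹' W = Wᶜ)
    (hA : (g + ·) ⁻¹' A = (h + ·) ⁻¹' A) : μ (A ∩ W) = μ (A ∩ Wᶜ) :=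
  calc μ (A ∩ W) = μ ((g + ·) ⁻¹' (A ∩ W)) := (measure_preimage_add μ g _).symm
    _ = μ ((h + ·) ⁻¹' (A ∩ Wᶜ)) := by
      rw [preimage_inter, preimage_inter, hA, hg, preimage_compl, hh, compl_compl]
    _ = μ (A ∩ Wᶜ) := measure_preimage_add μ h _

theorem Measure.eq_zero_of_measure_inter_eq_measure_inter_compl {α : Type*}
    [m : MeasurableSpace α] {μ : Measure α} [IsFiniteMeasure μ] {C : Set (Set α)}
    (hgen : m = MeasurableSpace.generateFrom C) (hC : IsPiSystem C) (huniv : univ ∈ C)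
    {W : Set α} (hW : MeasurableSet W) (h : ∀ A ∈ C, μ (A ∩ W) = μ (A ∩ Wᶜ)) : μ = 0 := by
  have hrestrict : μ.restrict W = μ.restrict Wᶜ := by
    refine ext_of_generate_finite C hgen hC (fun A hA => ?_) ?_
    · rw [restrict_apply' hW, restrict_apply' hW.compl, h A hA]
    · rw [restrict_apply' hW, restrict_apply' hW.compl, h univ huniv]
  have hW0 : μ W = 0 := by
    simpa [restrict_apply' hW, restrict_apply' hW.compl] using congr($hrestrict W)
  have hWc0 : μ Wᶜ = 0 := by
    simpa [restrict_apply' hW, restrict_apply' hW.compl] using congr($hrestrict Wᶜ).symm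
  rw [← measure_univ_eq_zero, ← union_compl_self W]
  exact measure_union_null hW0 hWc0

end MeasureTheory

def charVec (s : Finset ℕ) : ℕ → Bool := fun i => decide (i ∈ s)

theorem charVec_add_charVec_add (s : Finset ℕ) (x : ℕ → Bool) :
    charVec s + (charVec s + x) = x := by
  funext i
  simp [Bool.add_eq_xor]

theorem flip0_eq_charVec_add : flip0 = (charVec {0} + ·) := by
  funext x i
  by_cases hi : i = 0 <;> simp [flip0, charVec, hi, Bool.add_eq_xor]

theorem E0_charVec_add (s : Finset ℕ) (x : ℕ → Bool) : E0 x (charVec s + x) := by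
  obtain ⟨n, hn⟩ := s.exists_nat_subset_range
  refine ⟨n, fun m hm => ?_⟩
  have : m ∉ s := fun h => by simpa using (Finset.mem_range.1 (hn h)).trans_le hm
  simp [charVec, this, Bool.add_eq_xor]

theorem even_colorSum_charVec_add_iff (s : Finset ℕ) (x : ℕ → Bool) :
    Even (colorSum x (charVec s + x)) ↔ Even s.card := by
  have hE : ∃ n, ∀ m ≥ n, x m = (charVec s + x) m := E0_charVec_add s x
  have hs : s ⊆ Finset.range (Nat.find hE) := fun i hi => by
    by_contra hlt
    have := Nat.find_spec hE i (not_lt.1 (mt Finset.mem_range.2 hlt))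
    simp [charVec, hi, Bool.add_eq_xor] at this
  have hterm : ∀ i, ((x i).toNat + ((charVec s + x) i).toNat : ZMod 2) =
      if i ∈ s then 1 else 0 := fun i => by
    by_cases hi : i ∈ s <;> simp only [charVec, hi, Pi.add_apply, Bool.add_eq_xor] <;>
      cases x i <;> decide
  rw [colorSum, dif_pos hE, ← Finset.sum_add_distrib, ← ZMod.natCast_eq_zero_iff_even,
    ← ZMod.natCast_eq_zero_iff_even]
  push_cast
  rw [Finset.sum_congr rfl fun i _ => hterm i, Finset.sum_boole, Finset.filter_mem_eq_inter,
    Finset.inter_eq_right.2 hs]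

theorem F0_charVec_add {s : Finset ℕ} (hs : Even s.card) (x : ℕ → Bool) :
    F0 x (charVec s + x) :=
  Or.inr ⟨E0_charVec_add s x, (even_colorSum_charVec_add_iff s x).2 hs⟩

theorem preimage_charVec_add_of_F0_invariant {W : Set (ℕ → Bool)}
    (hW : ∀ x ∈ W, ∀ y, F0 x y → y ∈ W) {s : Finset ℕ} (hs : Even s.card) :
    (charVec s + ·) ⁻¹' W = W := by
  ext x
  refine ⟨fun hx => ?_, fun hx => hW x hx _ (F0_charVec_add hs x)⟩
  have := F0_charVec_add hs (charVec s + x)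
  rw [charVec_add_charVec_add] at this
  exact hW _ hx x this

/-- There is no Borel `F0`-invariant set `W ⊆ 2^ℕ` with `W ∪ σ(W) = 2^ℕ` and
`W ∩ σ(W) = ∅`, where `σ = flip0` flips coordinate `0`. -/
theorem no_borel_F0_invariant_half :
    ¬ ∃ W : Set (ℕ → Bool), MeasurableSet W ∧
      (∀ x ∈ W, ∀ y : ℕ → Bool, F0 x y → y ∈ W) ∧
      W ∪ flip0 '' W = Set.univ ∧ W ∩ flip0 '' W = ∅ := by
  rintro ⟨W, hWm, hWinv, hWu, hWd⟩
  rw [flip0_eq_charVec_add] at hWu hWd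
  have hflip : (charVec {0} + ·) ⁻¹' W = Wᶜ :=
    Function.Involutive.preimage_eq_compl_of_union_of_inter (charVec_add_charVec_add {0}) hWu hWd
  have hhalf : ∀ A ∈ measurableCylinders fun _ : ℕ => Bool,
      Measure.addHaar (A ∩ W) = Measure.addHaar (A ∩ Wᶜ) := by
    intro A hA
    obtain ⟨s, S, -, rfl⟩ := (mem_measurableCylinders A).1 hA
    obtain ⟨m, hm⟩ := Infinite.exists_notMem_finset (insert 0 s)
    rw [Finset.mem_insert, not_or] at hm
    refine measure_inter_eq_measure_inter_compl_of_preimage_add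
      (preimage_charVec_add_of_F0_invariant hWinv (s := {0, m}) ?_) hflip
      (preimage_add_cylinder_congr (α := fun _ => Bool) (fun i hi => ?_) S)
    · rw [Finset.card_pair (Ne.symm hm.1)]
      exact even_two
    · have : i ≠ m := fun h => hm.2 (h ▸ hi)
      simp [charVec, this]
  exact NeZero.ne _ (Measure.eq_zero_of_measure_inter_eq_measure_inter_compl
    generateFrom_measurableCylinders.symm isPiSystem_measurableCylinders
    (univ_mem_measurableCylinders _) hWm hhalf)
end
end
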